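/- Let X be a finitely ramified fractal and k ∈ ℕ such that, for every n, every n-cell of X contains at least two disjoint (n+k)-cells and no two disjoint n-cells of X both intersect a common (n+k)-cell. Let α be a real number with 1 < α ≤ (3/2)^{1/k}, and let d_α be the metric defined by d_α(p,q) = inf { Σ_{i=1}^{l} α^{−|E_i|} : E_1,…,E_l is a cell chain connecting p and q }. Then every n-cell E of X satisfies α^{1−n−2k} ≤ diam_{d_α}(E) ≤ α^{−n}. -/

import Mathlib

open Set

/-- A finitely ramified cell structure on a topological space `X`: a locally finite,
level-indexed family of "cells", where each cell is compact, connected, with nonempty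
interior, the unique `0`-cell is all of `X`, every `(n+1)`-cell lies in some `n`-cell,
each `n`-cell is the union of the `(n+1)`-cells it contains, two distinct cells of the
same level meet in a finite set, and every infinite descending chain of cells
intersects in a single point. -/
structure CellStructure (X : Type*) [TopologicalSpace X] where
  cells : ℕ → Set (Set X)
  finite_cells : ∀ n, (cells n).Finite
  isCompact_cells : ∀ n, ∀ E ∈ cells n, IsCompact E
  isConnected_cells : ∀ n, ∀ E ∈ cells n, IsConnected E
  interior_nonempty : ∀ n, ∀ E ∈ cells n, (interior E).Nonempty
  root : cells 0 = {Set.univ}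
  exists_parent : ∀ n, ∀ E' ∈ cells (n + 1), ∃ E ∈ cells n, E' ⊆ E
  eq_sUnion_children : ∀ n, ∀ E ∈ cells n, E = ⋃₀ {E' | E' ∈ cells (n + 1) ∧ E' ⊆ E}
  inter_finite : ∀ n, ∀ E₁ ∈ cells n, ∀ E₂ ∈ cells n, E₁ ≠ E₂ → (E₁ ∩ E₂).Finite
  descending_singleton : ∀ E : ℕ → Set X, (∀ n, E n ∈ cells n) → (∀ n, E (n + 1) ⊆ E n) →
    ∃ p : X, (⋂ n, E n) = {p}

/-- `d` is a metric (distance function) on the set `X`. -/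
def IsMetricOn {X : Type*} (d : X → X → ℝ) : Prop :=
  (∀ x y, 0 ≤ d x y) ∧ (∀ x y, d x y = 0 ↔ x = y) ∧ (∀ x y, d x y = d y x) ∧
    ∀ x y z, d x z ≤ d x y + d y z

/-- The distance function `d` induces the given topology on `X`. -/
def InducesTopology {X : Type*} [TopologicalSpace X] (d : X → X → ℝ) : Prop :=
  ∀ s : Set X, IsOpen s ↔ ∀ x ∈ s, ∃ ε > 0, ∀ y, d x y < ε → y ∈ s

/-- The diameter of a set with respect to a distance function. -/
noncomputable def sdiam {X : Type*} (d : X → X → ℝ) (S : Set X) : ℝ :=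
  sSup (Set.image2 d S S)

/-- The distance between two sets with respect to a distance function. -/
noncomputable def sdist {X : Type*} (d : X → X → ℝ) (S T : Set X) : ℝ :=
  sInf (Set.image2 d S T)

/-- The distance function `d` is `(r,R,C,δ)`-undistorted with respect to the family
of cells `cells`: exponential decay of diameter ratios of intersecting cells, and
cell separation for disjoint cells of the same level. -/
def IsUndistortedWith {X : Type*} (cells : ℕ → Set (Set X)) (d : X → X → ℝ)
    (r R C δ : ℝ) : Prop :=
  0 < r ∧ r ≤ R ∧ R < 1 ∧ 1 ≤ C ∧ 0 < δ ∧
    (∀ m n : ℕ, m ≤ n → ∀ E ∈ cells m, ∀ E' ∈ cells n, (E ∩ E').Nonempty →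
      r ^ (n - m) / C ≤ sdiam d E' / sdiam d E ∧
        sdiam d E' / sdiam d E ≤ C * R ^ (n - m)) ∧
    ∀ n : ℕ, ∀ E₁ ∈ cells n, ∀ E₂ ∈ cells n, Disjoint E₁ E₂ →
      δ * sdiam d E₁ ≤ sdist d E₁ E₂

/-- `d` is undistorted if it is `(r,R,C,δ)`-undistorted for some constants. -/
def IsUndistorted {X : Type*} (cells : ℕ → Set (Set X)) (d : X → X → ℝ) : Prop :=
  ∃ r R C δ : ℝ, IsUndistortedWith cells d r R C δ

/-- `η` is a homeomorphism of `[0,∞)` onto itself (equivalently: a continuous,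
strictly increasing surjection of `[0,∞)` onto `[0,∞)` fixing `0`). -/
def IsQSGauge (η : ℝ → ℝ) : Prop :=
  ContinuousOn η (Set.Ici 0) ∧ StrictMonoOn η (Set.Ici 0) ∧ η 0 = 0 ∧
    Set.MapsTo η (Set.Ici 0) (Set.Ici 0) ∧ Set.SurjOn η (Set.Ici 0) (Set.Ici 0)

/-- The `η`-quasisymmetry inequality for a map `f` between sets carrying
distance functions `dX` and `dY`. -/
def QSIneq {X Y : Type*} (dX : X → X → ℝ) (dY : Y → Y → ℝ) (f : X → Y) (η : ℝ → ℝ) : Prop :=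
  ∀ a b c : X, a ≠ b → a ≠ c → b ≠ c →
    dY (f a) (f b) / dY (f a) (f c) ≤ η (dX a b / dX a c)


/-- The weight `Σ α^{-|E_i|}` of a chain of cells, each recorded with its level. -/
noncomputable def chainWeight {X : Type*} (α : ℝ) (c : List (ℕ × Set X)) : ℝ :=
  (c.map fun e => α ^ (-(e.1 : ℤ))).sum

/-- `c` is a cell chain connecting `p` to `q`: a nonempty finite sequence of cells
(recorded with their levels) with `p` in the first cell, `q` in the last one, and
consecutive cells intersecting. -/
def IsCellChain {X : Type*} [TopologicalSpace X] (CS : CellStructure X) (p q : X)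
    (c : List (ℕ × Set X)) : Prop :=
  c ≠ [] ∧ (∀ e ∈ c, e.2 ∈ CS.cells e.1) ∧
    (∃ e, c.head? = some e ∧ p ∈ e.2) ∧ (∃ e, c.getLast? = some e ∧ q ∈ e.2) ∧
    List.Chain' (fun e f => (e.2 ∩ f.2).Nonempty) c

/-- The distance function `d_α(p,q) = inf { Σ α^{-|E_i|} }` over all cell chains
connecting `p` and `q`. -/
noncomputable def dAlpha {X : Type*} [TopologicalSpace X] (CS : CellStructure X)
    (α : ℝ) (p q : X) : ℝ :=
  sInf {s : ℝ | ∃ c : List (ℕ × Set X), IsCellChain CS p q c ∧ chainWeight α c = s}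

/-- No intersecting pair of `n`-cells contains `p` and `q` respectively. -/
def NoPairAt {X : Type*} [TopologicalSpace X] (CS : CellStructure X) (p q : X)
    (n : ℕ) : Prop :=
  ∀ Ex ∈ CS.cells n, ∀ Ey ∈ CS.cells n, p ∈ Ex → q ∈ Ey → ¬(Ex ∩ Ey).Nonempty

/-!
Let `P`, `Q` be disjoint cells of levels at most `M`. Every cell chain from `P` to `Q` has
weight at least `α^(1-k-M)`: either it uses a cell of level `< M + k`, or each of its cells lies in
an `(M+k)`-cell. No `(M+k)`-cell meets both `P` and `Q`, so somewhere the chain steps from a cell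
inside an `(M+k)`-cell `A` meeting `P` (hence missing `Q`) to a cell inside an `(M+k)`-cell `B`
missing `P`. Cutting the chain there gives shorter chains from `P` to `B` and from `A` to `Q`, each
of weight at least `α^(1-2k-M)` by induction, and `2 α^(1-2k-M) ≥ α^(1-k-M)` since `α^k ≤ 2`.
Two disjoint `(n+k)`-subcells of an `n`-cell then give the lower bound; the one-cell chain gives
the upper bound.
-/

namespace List

theorem exists_eq_append_cons_cons_of_head?_of_getLast? {α : Type*} {P : α → Prop} {l : List α}
    {a b : α} (ha : l.head? = some a) (hb : l.getLast? = some b) (hPa : P a) (hPb : ¬P b) :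
    ∃ l₁ x y l₂, l = l₁ ++ x :: y :: l₂ ∧ P x ∧ ¬P y := by
  induction l generalizing a with
  | nil => simp at ha
  | cons c l ih =>
    obtain rfl : c = a := by simpa using ha
    cases l with
    | nil => exact absurd (by simpa using hb) (ne_of_apply_ne P fun h => hPb (h ▸ hPa))
    | cons d l =>
      by_cases hPd : P d
      · obtain ⟨l₁, x, y, l₂, hl, hx, hy⟩ := ih rfl (by simpa using hb) hPd
        exact ⟨c :: l₁, x, y, l₂, by rw [hl, cons_append], hx, hy⟩
      · exact ⟨[], c, d, l, rfl, hPa, hPd⟩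

end List

namespace CellStructure

variable {X : Type*} [TopologicalSpace X] (CS : CellStructure X)

def IsSeparated (k : ℕ) : Prop :=
  ∀ n : ℕ, ∀ E₁ ∈ CS.cells n, ∀ E₂ ∈ CS.cells n, Disjoint E₁ E₂ →
    ∀ F ∈ CS.cells (n + k), ¬((E₁ ∩ F).Nonempty ∧ (E₂ ∩ F).Nonempty)

variable {CS}

theorem univ_mem_cells_zero : (univ : Set X) ∈ CS.cells 0 := by
  rw [CS.root]
  exact mem_singleton _

theorem nonempty_of_mem_cells {n : ℕ} {E : Set X} (hE : E ∈ CS.cells n) : E.Nonempty :=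
  (CS.interior_nonempty n E hE).mono interior_subset

theorem exists_superset_of_le {m n : ℕ} (hmn : m ≤ n) {E : Set X} (hE : E ∈ CS.cells n) :
    ∃ A ∈ CS.cells m, E ⊆ A := by
  induction hmn generalizing E with
  | refl => exact ⟨E, hE, subset_rfl⟩
  | @step n _ ih =>
    obtain ⟨F, hF, hEF⟩ := CS.exists_parent n E hE
    obtain ⟨A, hA, hFA⟩ := ih hF
    exact ⟨A, hA, hEF.trans hFA⟩

theorem exists_mem_subset_of_le {m n : ℕ} (hmn : m ≤ n) {G : Set X} (hG : G ∈ CS.cells m)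
    {y : X} (hy : y ∈ G) : ∃ F ∈ CS.cells n, y ∈ F ∧ F ⊆ G := by
  induction hmn with
  | refl => exact ⟨G, hG, hy, subset_rfl⟩
  | @step n _ ih =>
    obtain ⟨F, hF, hyF, hFG⟩ := ih
    rw [CS.eq_sUnion_children n F hF] at hyF
    obtain ⟨F', ⟨hF', hF'F⟩, hyF'⟩ := hyF
    exact ⟨F', hF', hyF', hF'F.trans hFG⟩

theorem IsSeparated.not_nonempty_inter_and {k : ℕ} (hsep : CS.IsSeparated k) {m n : ℕ}
    {P Q H : Set X} (hP : P ∈ CS.cells m) (hQ : Q ∈ CS.cells n) (hPQ : Disjoint P Q)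
    (hH : H ∈ CS.cells (max m n + k)) : ¬((P ∩ H).Nonempty ∧ (Q ∩ H).Nonempty) := by
  wlog hmn : m ≤ n generalizing m n P Q
  · rw [and_comm]
    exact this hQ hP hPQ.symm (by rwa [max_comm]) (le_of_not_ge hmn)
  rw [max_eq_right hmn] at hH
  rintro ⟨⟨y, hyP, hyH⟩, hQH⟩
  obtain ⟨P', hP', hyP', hP'P⟩ := exists_mem_subset_of_le hmn hP hyP
  exact hsep n P' hP' Q hQ (hPQ.mono_left hP'P) H hH ⟨⟨y, hyP', hyH⟩, hQH⟩

end CellStructure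

section ChainWeight

variable {X : Type*} {α : ℝ}

theorem chainWeight_nonneg (hα : 0 ≤ α) (c : List (ℕ × Set X)) : 0 ≤ chainWeight α c :=
  List.sum_nonneg <| by
    simp only [List.mem_map]
    rintro _ ⟨e, -, rfl⟩
    exact zpow_nonneg hα _

theorem zpow_le_chainWeight (hα : 0 ≤ α) {c : List (ℕ × Set X)} {e : ℕ × Set X} (he : e ∈ c) :
    α ^ (-(e.1 : ℤ)) ≤ chainWeight α c := by
  refine List.single_le_sum ?_ _ (List.mem_map_of_mem he)
  simp only [List.mem_map]
  rintro _ ⟨e, -, rfl⟩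
  exact zpow_nonneg hα _

theorem chainWeight_append (α : ℝ) (c₁ c₂ : List (ℕ × Set X)) :
    chainWeight α (c₁ ++ c₂) = chainWeight α c₁ + chainWeight α c₂ := by
  simp [chainWeight]

end ChainWeight

section CellChains

variable {X : Type*} [TopologicalSpace X] {CS : CellStructure X}

theorem IsCellChain.singleton {n : ℕ} {E : Set X} (hE : E ∈ CS.cells n) {p q : X} (hp : p ∈ E)
    (hq : q ∈ E) : IsCellChain CS p q [(n, E)] :=
  ⟨List.cons_ne_nil _ _, by simpa using hE, ⟨_, rfl, hp⟩, ⟨_, rfl, hq⟩, List.isChain_singleton _⟩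

theorem IsCellChain.split {p q z : X} {l₁ l₂ : List (ℕ × Set X)} {x y : ℕ × Set X}
    (hc : IsCellChain CS p q (l₁ ++ x :: y :: l₂)) (hzx : z ∈ x.2) (hzy : z ∈ y.2) :
    IsCellChain CS p z (l₁ ++ [x]) ∧ IsCellChain CS z q (y :: l₂) := by
  obtain ⟨-, hmem, ⟨e, he, hpe⟩, ⟨e', he', hqe'⟩, hchain⟩ := hc
  have hchain' := List.isChain_append_cons_cons.mp hchain
  refine ⟨⟨by simp, fun e he => hmem e (by simp at he ⊢; tauto), ⟨e, ?_, hpe⟩,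
    ⟨x, by simp, hzx⟩, hchain'.1⟩, ⟨by simp, fun e he => hmem e (by simp at he ⊢; tauto),
    ⟨y, rfl, hzy⟩, ⟨e', ?_, hqe'⟩, hchain'.2.2⟩⟩
  · cases l₁ <;> simp_all
  · simpa [List.getLast?_append] using he'

end CellChains

namespace CellStructure.IsSeparated

variable {X : Type*} [TopologicalSpace X] {CS : CellStructure X} {k : ℕ}

theorem exists_split_of_forall_le (hsep : CS.IsSeparated k) {m n : ℕ} {P Q : Set X}
    (hP : P ∈ CS.cells m) (hQ : Q ∈ CS.cells n) (hPQ : Disjoint P Q) {p q : X} (hp : p ∈ P)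
    (hq : q ∈ Q) {L : List (ℕ × Set X)} (hL : IsCellChain CS p q L)
    (hlev : ∀ e ∈ L, max m n + k ≤ e.1) :
    ∃ l₁ l₂ z, ∃ A ∈ CS.cells (max m n + k), ∃ B ∈ CS.cells (max m n + k),
      L = l₁ ++ l₂ ∧ l₂ ≠ [] ∧ Disjoint P B ∧ Disjoint A Q ∧ z ∈ A ∧ z ∈ B ∧
        IsCellChain CS p z l₁ ∧ IsCellChain CS z q l₂ := by
  have ⟨_, hmem, ⟨e₀, he₀, hpe₀⟩, ⟨e₁, he₁, hqe₁⟩, hchain⟩ := hL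
  have hanc : ∀ e ∈ L, ∃ A ∈ CS.cells (max m n + k), e.2 ⊆ A := fun e he =>
    exists_superset_of_le (hlev e he) (hmem e he)
  let InCellMeetingP : ℕ × Set X → Prop := fun e =>
    ∃ A ∈ CS.cells (max m n + k), e.2 ⊆ A ∧ (P ∩ A).Nonempty
  have hfirst : InCellMeetingP e₀ := by
    obtain ⟨A, hA, hsub⟩ := hanc e₀ (List.mem_of_mem_head? he₀)
    exact ⟨A, hA, hsub, p, hp, hsub hpe₀⟩
  have hlast : ¬InCellMeetingP e₁ := fun ⟨A, hA, hsub, hPA⟩ =>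
    hsep.not_nonempty_inter_and hP hQ hPQ hA ⟨hPA, q, hq, hsub hqe₁⟩
  obtain ⟨l₁, x, y, l₂, rfl, ⟨A, hA, hxA, hPA⟩, hy⟩ :=
    List.exists_eq_append_cons_cons_of_head?_of_getLast? he₀ he₁ hfirst hlast
  obtain ⟨z, hzx, hzy⟩ := (List.isChain_append_cons_cons.mp hchain).2.1
  obtain ⟨B, hB, hyB⟩ := hanc y (by simp)
  have hPB : Disjoint P B :=
    disjoint_iff_inter_eq_empty.mpr (not_nonempty_iff_eq_empty.mp fun h => hy ⟨B, hB, hyB, h⟩)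
  have hAQ : Disjoint A Q := disjoint_right.mpr fun w hwQ hwA =>
    hsep.not_nonempty_inter_and hP hQ hPQ hA ⟨hPA, w, hwQ, hwA⟩
  obtain ⟨hc₁, hc₂⟩ := hL.split hzx hzy
  exact ⟨l₁ ++ [x], y :: l₂, z, A, hA, B, hB, by simp, List.cons_ne_nil _ _, hPB, hAQ, hxA hzx,
    hyB hzy, hc₁, hc₂⟩

theorem zpow_le_chainWeight_of_disjoint (hsep : CS.IsSeparated k) {α : ℝ} (hα : 1 ≤ α) (hαk : α ^ k ≤ 2)
    {m n : ℕ} {P Q : Set X} (hP : P ∈ CS.cells m) (hQ : Q ∈ CS.cells n) (hPQ : Disjoint P Q)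
    {p q : X} (hp : p ∈ P) (hq : q ∈ Q) {L : List (ℕ × Set X)} (hL : IsCellChain CS p q L) :
    α ^ (1 - (k : ℤ) - (max m n : ℕ)) ≤ chainWeight α L := by
  by_cases hlow : ∃ e ∈ L, e.1 < max m n + k
  · obtain ⟨e, he, hlt⟩ := hlow
    exact (zpow_le_zpow_right₀ hα (by omega)).trans (zpow_le_chainWeight (by linarith) he)
  push Not at hlow
  obtain ⟨l₁, l₂, z, A, hA, B, hB, hsplit, hl₂, hPB, hAQ, hzA, hzB, hc₁, hc₂⟩ :=
    hsep.exists_split_of_forall_le hP hQ hPQ hp hq hL hlow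
  have hw₁ := hsep.zpow_le_chainWeight_of_disjoint hα hαk hP hB hPB hp hzB hc₁
  have hw₂ := hsep.zpow_le_chainWeight_of_disjoint hα hαk hA hQ hAQ hzA hq hc₂
  rw [max_eq_right (by omega)] at hw₁
  rw [max_eq_left (by omega)] at hw₂
  calc α ^ (1 - (k : ℤ) - (max m n : ℕ))
      = α ^ k * α ^ (1 - (k : ℤ) - (max m n + k : ℕ)) := by
        rw [← zpow_natCast, ← zpow_add₀ (by positivity)]
        push_cast
        ring_nf
    _ ≤ 2 * α ^ (1 - (k : ℤ) - (max m n + k : ℕ)) := by gcongr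
    _ ≤ chainWeight α L := by rw [hsplit, chainWeight_append]; linarith
termination_by L.length
decreasing_by
  all_goals simp only [hsplit, List.length_append]
  · exact Nat.lt_add_of_pos_right (List.length_pos_iff.mpr hl₂)
  · exact Nat.lt_add_of_pos_left (List.length_pos_iff.mpr hc₁.1)

end CellStructure.IsSeparated

section dAlpha

variable {X : Type*} [TopologicalSpace X] {CS : CellStructure X} {α : ℝ}

theorem dAlpha_le_chainWeight (hα : 0 ≤ α) {p q : X} {c : List (ℕ × Set X)}
    (hc : IsCellChain CS p q c) : dAlpha CS α p q ≤ chainWeight α c :=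
  csInf_le ⟨0, by rintro _ ⟨c, -, rfl⟩; exact chainWeight_nonneg hα c⟩ ⟨c, hc, rfl⟩

theorem le_dAlpha {p q : X} {b : ℝ} (h : ∀ c, IsCellChain CS p q c → b ≤ chainWeight α c) :
    b ≤ dAlpha CS α p q :=
  le_csInf ⟨_, _, .singleton CS.univ_mem_cells_zero (mem_univ p) (mem_univ q), rfl⟩
    (by rintro _ ⟨c, hc, rfl⟩; exact h c hc)

theorem dAlpha_le_zpow (hα : 0 ≤ α) {n : ℕ} {E : Set X} (hE : E ∈ CS.cells n) {p q : X}
    (hp : p ∈ E) (hq : q ∈ E) : dAlpha CS α p q ≤ α ^ (-(n : ℤ)) := by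
  simpa [chainWeight] using dAlpha_le_chainWeight hα (.singleton hE hp hq)

theorem dAlpha_le_sdiam (hα : 0 ≤ α) {E : Set X} {p q : X} (hp : p ∈ E) (hq : q ∈ E) :
    dAlpha CS α p q ≤ sdiam (dAlpha CS α) E := by
  refine le_csSup ⟨1, ?_⟩ (mem_image2_of_mem hp hq)
  rintro _ ⟨p, -, q, -, rfl⟩
  simpa using dAlpha_le_zpow hα CS.univ_mem_cells_zero (mem_univ p) (mem_univ q)

theorem sdiam_dAlpha_le_zpow (hα : 0 ≤ α) {n : ℕ} {E : Set X} (hE : E ∈ CS.cells n) :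
    sdiam (dAlpha CS α) E ≤ α ^ (-(n : ℤ)) := by
  obtain ⟨p, hp⟩ := CS.nonempty_of_mem_cells hE
  refine csSup_le ⟨_, mem_image2_of_mem hp hp⟩ ?_
  rintro _ ⟨p, hp, q, hq, rfl⟩
  exact dAlpha_le_zpow hα hE hp hq

end dAlpha

theorem pow_le_of_le_rpow_inv {α b : ℝ} {k : ℕ} (hα : 0 ≤ α) (hb : 1 ≤ b)
    (h : α ≤ b ^ (k : ℝ)⁻¹) : α ^ k ≤ b := by
  rcases k.eq_zero_or_pos with rfl | hk
  · simpa using hb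
  · rw [← Real.rpow_natCast]
    exact (Real.le_rpow_inv_iff_of_pos hα (by linarith) (by exact_mod_cast hk)).mp h

theorem stmt8_general {X : Type*} [TopologicalSpace X] (CS : CellStructure X) (k : ℕ)
    (hk₁ : ∀ n : ℕ, ∀ E ∈ CS.cells n, ∃ E₁ ∈ CS.cells (n + k), ∃ E₂ ∈ CS.cells (n + k),
      E₁ ⊆ E ∧ E₂ ⊆ E ∧ E₁ ≠ E₂ ∧ Disjoint E₁ E₂)
    (hk₂ : ∀ n : ℕ, ∀ E₁ ∈ CS.cells n, ∀ E₂ ∈ CS.cells n, Disjoint E₁ E₂ →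
      ∀ F ∈ CS.cells (n + k), ¬((E₁ ∩ F).Nonempty ∧ (E₂ ∩ F).Nonempty))
    (α : ℝ) (hα₁ : 1 < α) (hα₂ : α ≤ (3 / 2 : ℝ) ^ ((k : ℝ))⁻¹) :
    ∀ n : ℕ, ∀ E ∈ CS.cells n,
      α ^ (1 - (n : ℤ) - 2 * (k : ℤ)) ≤ sdiam (dAlpha CS α) E ∧
        sdiam (dAlpha CS α) E ≤ α ^ (-(n : ℤ)) := by
  have hα₀ : 0 ≤ α := by linarith
  have hαk : α ^ k ≤ 2 := (pow_le_of_le_rpow_inv hα₀ (by norm_num) hα₂).trans (by norm_num)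
  intro n E hE
  refine ⟨?_, sdiam_dAlpha_le_zpow hα₀ hE⟩
  obtain ⟨E₁, hE₁, E₂, hE₂, hE₁E, hE₂E, -, hdisj⟩ := hk₁ n E hE
  obtain ⟨p, hp⟩ := CS.nonempty_of_mem_cells hE₁
  obtain ⟨q, hq⟩ := CS.nonempty_of_mem_cells hE₂
  calc α ^ (1 - (n : ℤ) - 2 * (k : ℤ))
      = α ^ (1 - (k : ℤ) - (max (n + k) (n + k) : ℕ)) := by rw [max_self]; push_cast; ring_nf
    _ ≤ dAlpha CS α p q := le_dAlpha fun c hc =>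
        CellStructure.IsSeparated.zpow_le_chainWeight_of_disjoint hk₂ hα₁.le hαk hE₁ hE₂ hdisj hp hq hc
    _ ≤ sdiam (dAlpha CS α) E := dAlpha_le_sdiam hα₀ (hE₁E hp) (hE₂E hq)

/-- Under the combinatorial hypotheses of Theorem 1.8 with constant
`k`, and `1 < α ≤ (3/2)^{1/k}`, every `n`-cell `E` satisfies
`α^{1-n-2k} ≤ diam_{d_α}(E) ≤ α^{-n}`. -/
theorem stmt8 {X : Type*} [TopologicalSpace X] [CompactSpace X] [ConnectedSpace X]
    [TopologicalSpace.MetrizableSpace X] (CS : CellStructure X) (k : ℕ)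
    (hk₁ : ∀ n : ℕ, ∀ E ∈ CS.cells n, ∃ E₁ ∈ CS.cells (n + k), ∃ E₂ ∈ CS.cells (n + k),
      E₁ ⊆ E ∧ E₂ ⊆ E ∧ E₁ ≠ E₂ ∧ Disjoint E₁ E₂)
    (hk₂ : ∀ n : ℕ, ∀ E₁ ∈ CS.cells n, ∀ E₂ ∈ CS.cells n, Disjoint E₁ E₂ →
      ∀ F ∈ CS.cells (n + k), ¬((E₁ ∩ F).Nonempty ∧ (E₂ ∩ F).Nonempty))
    (α : ℝ) (hα₁ : 1 < α) (hα₂ : α ≤ (3 / 2 : ℝ) ^ ((k : ℝ))⁻¹) :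
    ∀ n : ℕ, ∀ E ∈ CS.cells n,
      α ^ (1 - (n : ℤ) - 2 * (k : ℤ)) ≤ sdiam (dAlpha CS α) E ∧
        sdiam (dAlpha CS α) E ≤ α ^ (-(n : ℤ)) :=
  stmt8_general CS k hk₁ hk₂ α hα₁ hα₂
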